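/- Let C_{Γ(LV,2,1)} be the class of all Kripke models whose frame consists of a root x and two disjoint two-element sets C0 and C1 not containing x, where the accessibility relation R is the reflexive relation with C0×C0 ⊆ R, C1×C1 ⊆ R, x R y for every world y, and no other pairs (a root below exactly two clusters, each consisting of exactly two final worlds). Then C_{Γ(LV,2,1)} enjoys 3-IP. -/

import Mathlib

/-- Modal formulas over countably many variables. -/
inductive ModalForm : Type where
  | var : ℕ → ModalForm
  | bot : ModalForm
  | and : ModalForm → ModalForm → ModalForm
  | or : ModalForm → ModalForm → ModalForm
  | not : ModalForm → ModalForm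
  | imp : ModalForm → ModalForm → ModalForm
  | box : ModalForm → ModalForm

namespace ModalForm

mutual
  /-- positively occurring variables -/
  def vpos : ModalForm → Finset ℕ
    | var p => {p}
    | bot => ∅
    | and φ ψ => vpos φ ∪ vpos ψ
    | or φ ψ => vpos φ ∪ vpos ψ
    | not φ => vneg φ
    | imp φ ψ => vneg φ ∪ vpos ψ
    | box φ => vpos φ
  /-- negatively occurring variables -/
  def vneg : ModalForm → Finset ℕ
    | var _ => ∅
    | bot => ∅
    | and φ ψ => vneg φ ∪ vneg ψ
    | or φ ψ => vneg φ ∪ vneg ψ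
    | not φ => vpos φ
    | imp φ ψ => vpos φ ∪ vneg ψ
    | box φ => vneg φ
end

/-- Modal depth: maximal nesting of `□`. -/
def depth : ModalForm → ℕ
  | var _ => 0
  | bot => 0
  | and φ ψ => max (depth φ) (depth ψ)
  | or φ ψ => max (depth φ) (depth ψ)
  | not φ => depth φ
  | imp φ ψ => max (depth φ) (depth ψ)
  | box φ => depth φ + 1

/-- `◇φ := ¬□¬φ` -/
def dia (φ : ModalForm) : ModalForm := not (box (not φ))

/-- `⊤ := ¬⊥` -/
def top : ModalForm := not bot

end ModalForm

/-- An S4 Kripke frame: nonempty set of worlds with a reflexive transitive relation. -/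
structure KFrame : Type 1 where
  W : Type
  R : W → W → Prop
  nonempty : Nonempty W
  refl : ∀ x, R x x
  trans : ∀ x y z, R x y → R y z → R x z

/-- A Kripke model: a frame with a valuation. -/
structure KModel : Type 1 extends KFrame where
  val : W → ℕ → Prop

/-- The model based on frame `F` with valuation `V`. -/
def KFrame.toModel (F : KFrame) (V : F.W → ℕ → Prop) : KModel :=
  { toKFrame := F, val := V }

/-- Satisfaction in a Kripke model. -/
def KModel.Sat (M : KModel) : M.W → ModalForm → Prop
  | w, .var p => M.val w p
  | _, .bot => False
  | w, .and φ ψ => M.Sat w φ ∧ M.Sat w ψ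
  | w, .or φ ψ => M.Sat w φ ∨ M.Sat w ψ
  | w, .not φ => ¬ M.Sat w φ
  | w, .imp φ ψ => M.Sat w φ → M.Sat w ψ
  | w, .box φ => ∀ y, M.R w y → M.Sat y φ

/-- `(M0,w0) →ₙ^{(P⁺,P⁻)} (M1,w1)`: every `(P⁺,P⁻)`-formula of depth ≤ n
satisfied at `(M0,w0)` is satisfied at `(M1,w1)`. -/
def ModalArrow (Pp Pm : Finset ℕ) (n : ℕ) (M0 : KModel) (w0 : M0.W)
    (M1 : KModel) (w1 : M1.W) : Prop :=
  ∀ φ : ModalForm, φ.vpos ⊆ Pp → φ.vneg ⊆ Pm → φ.depth ≤ n →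
    M0.Sat w0 φ → M1.Sat w1 φ

/-- p-morphism between frames. -/
def PMorphism (F G : KFrame) (f : F.W → G.W) : Prop :=
  (∀ x y, F.R x y → G.R (f x) (f y)) ∧
  (∀ x w, G.R (f x) w → ∃ z, F.R x z ∧ f z = w)

/-- The class `C` of Kripke models enjoys `n`-IP. -/
def EnjoysIP (C : Set KModel) (n : ℕ) : Prop :=
  ∀ (Pp Pm : Finset ℕ) (M0 M1 : KModel), M0 ∈ C → M1 ∈ C →
    ∀ (w0 : M0.W) (w1 : M1.W), ModalArrow Pp Pm n M0 w0 M1 w1 →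
      ∃ (F : KFrame) (wstar : F.W) (f0 : F.W → M0.W) (f1 : F.W → M1.W),
        (∀ V : F.W → ℕ → Prop, F.toModel V ∈ C) ∧
        PMorphism F M0.toKFrame f0 ∧
        PMorphism F M1.toKFrame f1 ∧
        f0 wstar = w0 ∧ f1 wstar = w1 ∧
        ∀ x : F.W, ModalArrow Pp Pm 0 M0 (f0 x) M1 (f1 x)

/-- A world is final iff every successor is also a predecessor. -/
def KModel.Final (M : KModel) (w : M.W) : Prop := ∀ y, M.R w y → M.R y w

/-- The cluster of a world. -/
def KModel.cluster (M : KModel) (w : M.W) : Set M.W := {u | M.R w u ∧ M.R u w}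

/-- Cluster `C0` of `M0` matches cluster `C1` of `M1`. -/
def Matches (Pp Pm : Finset ℕ) (M0 M1 : KModel) (C0 : Set M0.W) (C1 : Set M1.W) : Prop :=
  (∀ u0 ∈ C0, ∃ u1 ∈ C1, ModalArrow Pp Pm 0 M0 u0 M1 u1) ∧
  (∀ u1 ∈ C1, ∃ u0 ∈ C0, ModalArrow Pp Pm 0 M0 u0 M1 u1)

/-- `φ` is satisfied at every world of every model in `C`. -/
def ValidOn (C : Set KModel) (φ : ModalForm) : Prop :=
  ∀ M ∈ C, ∀ w : M.W, M.Sat w φ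

/-- A set with exactly two elements. -/
def TwoElem {α : Type} (C : Set α) : Prop := ∃ a b : α, a ≠ b ∧ C = {a, b}

/-- The class of Γ(LV,2,1) models: a root below exactly two clusters,
each consisting of exactly two final worlds. -/
def C_LV21 : Set KModel :=
  {M | ∃ (x : M.W) (C0 C1 : Set M.W), x ∉ C0 ∧ x ∉ C1 ∧ Disjoint C0 C1 ∧
    TwoElem C0 ∧ TwoElem C1 ∧
    (∀ w : M.W, w = x ∨ w ∈ C0 ∨ w ∈ C1) ∧
    ∀ u v : M.W, M.R u v ↔
      (u = v ∨ (u ∈ C0 ∧ v ∈ C0) ∨ (u ∈ C1 ∧ v ∈ C1) ∨ u = x)}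

/-! Every world `w` of a model in `C_LV21` is the root of a fan: its successors are `w` and two
final two-element clusters (the same one twice if `w` is final), so the five-world frame of the
class maps onto its cone by a p-morphism. Let `ρ(P)` (`clusterFormula`) say that the cluster `P`
`Matches` the successors of a world. The depth-3 formulas `◇□ρ(P)` and `□◇(ρ(P) ∨ ρ(Q))` hold at
`w₀` for its clusters `P`, `Q` and transfer to `w₁`: the first says that `P` matches a cluster
below `w₁`, the second that every cluster below `w₁` is matched by `P` or `Q`. Hall's theorem for
`2 × 2` then pairs the clusters, and once more the worlds inside paired clusters. -/

namespace ModalForm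

def conj (l : List ModalForm) : ModalForm := l.foldr and top

def InFragment (Pp Pm : Finset ℕ) (n : ℕ) (φ : ModalForm) : Prop :=
  φ.vpos ⊆ Pp ∧ φ.vneg ⊆ Pm ∧ φ.depth ≤ n

variable {Pp Pm : Finset ℕ} {n : ℕ} {φ ψ : ModalForm}

theorem inFragment_var {p : ℕ} (hp : p ∈ Pp) : InFragment Pp Pm n (var p) :=
  ⟨by simpa [vpos], by simp [vneg], by simp [depth]⟩

theorem inFragment_top : InFragment Pp Pm n top :=
  ⟨by simp [top, vpos, vneg], by simp [top, vpos, vneg], by simp [top, depth]⟩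

namespace InFragment

theorem not (h : InFragment Pm Pp n φ) : InFragment Pp Pm n (not φ) :=
  ⟨by simpa [vpos] using h.2.1, by simpa [vneg] using h.1, by simpa [depth] using h.2.2⟩

theorem and (h : InFragment Pp Pm n φ) (h' : InFragment Pp Pm n ψ) :
    InFragment Pp Pm n (and φ ψ) :=
  ⟨Finset.union_subset h.1 h'.1, Finset.union_subset h.2.1 h'.2.1, max_le h.2.2 h'.2.2⟩

theorem or (h : InFragment Pp Pm n φ) (h' : InFragment Pp Pm n ψ) :
    InFragment Pp Pm n (or φ ψ) :=
  ⟨Finset.union_subset h.1 h'.1, Finset.union_subset h.2.1 h'.2.1, max_le h.2.2 h'.2.2⟩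

theorem box (h : InFragment Pp Pm n φ) : InFragment Pp Pm (n + 1) (box φ) :=
  ⟨by simpa [vpos] using h.1, by simpa [vneg] using h.2.1, by simpa [depth] using h.2.2⟩

theorem dia (h : InFragment Pp Pm n φ) : InFragment Pp Pm (n + 1) (dia φ) :=
  h.not.box.not

theorem conj {l : List ModalForm} (h : ∀ φ ∈ l, InFragment Pp Pm n φ) :
    InFragment Pp Pm n (conj l) := by
  induction l with
  | nil => exact inFragment_top
  | cons φ l ih =>
    exact (h φ List.mem_cons_self).and (ih fun ψ hψ => h ψ (List.mem_cons_of_mem φ hψ))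

end InFragment

end ModalForm

open ModalForm

namespace KModel

variable (M : KModel) {w : M.W}

@[simp]
theorem sat_conj {l : List ModalForm} : M.Sat w (conj l) ↔ ∀ φ ∈ l, M.Sat w φ := by
  induction l with
  | nil => simp [conj, top, Sat]
  | cons φ l ih => rw [List.forall_mem_cons, ← ih]; rfl

@[simp]
theorem sat_dia {φ : ModalForm} : M.Sat w (dia φ) ↔ ∃ y, M.R w y ∧ M.Sat y φ := by
  simp [dia, Sat]

end KModel

section ModalArrow

variable {Pp Pm : Finset ℕ} {M M0 M1 : KModel}

theorem ModalArrow.refl {n : ℕ} {w : M.W} : ModalArrow Pp Pm n M w M w :=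
  fun _ _ _ _ h => h

theorem ModalArrow.mono {m n : ℕ} {w0 : M0.W} {w1 : M1.W} (h : ModalArrow Pp Pm n M0 w0 M1 w1)
    (hmn : m ≤ n) : ModalArrow Pp Pm m M0 w0 M1 w1 :=
  fun φ h₁ h₂ h₃ => h φ h₁ h₂ (h₃.trans hmn)

theorem ModalArrow.sat {n : ℕ} {w0 : M0.W} {w1 : M1.W} {φ : ModalForm}
    (h : ModalArrow Pp Pm n M0 w0 M1 w1) (hφ : φ.InFragment Pp Pm n) (hs : M0.Sat w0 φ) :
    M1.Sat w1 φ :=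
  h φ hφ.1 hφ.2.1 hφ.2.2 hs

theorem sat_of_depth_eq_zero {φ : ModalForm} (hd : φ.depth = 0) {Pp Pm : Finset ℕ}
    {M0 M1 : KModel} {u : M0.W} {v : M1.W} (hp : φ.vpos ⊆ Pp) (hn : φ.vneg ⊆ Pm)
    (hPp : ∀ p ∈ Pp, M0.val u p → M1.val v p) (hPm : ∀ p ∈ Pm, M1.val v p → M0.val u p)
    (hs : M0.Sat u φ) : M1.Sat v φ := by
  induction φ generalizing Pp Pm M0 M1 with
  | var p => exact hPp p (hp (by simp [vpos])) hs
  | bot => exact hs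
  | and φ ψ ihφ ihψ =>
    simp only [depth, Nat.max_eq_zero_iff, vpos, vneg, Finset.union_subset_iff] at hd hp hn
    exact ⟨ihφ hd.1 hp.1 hn.1 hPp hPm hs.1, ihψ hd.2 hp.2 hn.2 hPp hPm hs.2⟩
  | or φ ψ ihφ ihψ =>
    simp only [depth, Nat.max_eq_zero_iff, vpos, vneg, Finset.union_subset_iff] at hd hp hn
    exact hs.imp (ihφ hd.1 hp.1 hn.1 hPp hPm) (ihψ hd.2 hp.2 hn.2 hPp hPm)
  | not φ ih =>
    simp only [depth, vpos, vneg] at hd hp hn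
    exact fun h => hs (ih hd hn hp hPm hPp h)
  | imp φ ψ ihφ ihψ =>
    simp only [depth, Nat.max_eq_zero_iff, vpos, vneg, Finset.union_subset_iff] at hd hp hn
    exact fun h => ihψ hd.2 hp.2 hn.2 hPp hPm (hs (ihφ hd.1 hn.1 hp.1 hPm hPp h))
  | box φ => simp [depth] at hd

theorem modalArrow_zero_iff {u : M0.W} {v : M1.W} :
    ModalArrow Pp Pm 0 M0 u M1 v ↔
      (∀ p ∈ Pp, M0.val u p → M1.val v p) ∧ (∀ p ∈ Pm, M1.val v p → M0.val u p) := by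
  refine ⟨fun h => ⟨fun p hp => h.sat (inFragment_var hp), fun p hp hv => ?_⟩,
    fun h φ hp hn hd => sat_of_depth_eq_zero (Nat.le_zero.mp hd) hp hn h.1 h.2⟩
  by_contra hu
  exact h.sat (inFragment_var hp).not hu hv

end ModalArrow

section Formulas

variable (Pp Pm : Finset ℕ) (M : KModel)

open Classical in
/-- The strongest `(P⁺,P⁻)`-formula of depth `0` true at `u`. -/
noncomputable def atomType (u : M.W) : ModalForm :=
  conj ((Pp.toList.filter (M.val u ·)).map var ++
    (Pm.toList.filter (¬ M.val u ·)).map (ModalForm.not ∘ var))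

noncomputable def clusterFormula (u1 u2 : M.W) : ModalForm :=
  .and (.box (.or (atomType Pp Pm M u1) (atomType Pp Pm M u2)))
    (.and (dia (atomType Pp Pm M u1)) (dia (atomType Pp Pm M u2)))

variable {Pp Pm M}

theorem inFragment_atomType (u : M.W) : (atomType Pp Pm M u).InFragment Pp Pm 0 := by
  refine InFragment.conj fun φ hφ => ?_
  simp only [List.mem_append, List.mem_map, List.mem_filter, Finset.mem_toList] at hφ
  rcases hφ with ⟨p, ⟨hp, -⟩, rfl⟩ | ⟨p, ⟨hp, -⟩, rfl⟩
  · exact inFragment_var hp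
  · exact (inFragment_var hp).not

theorem inFragment_clusterFormula (u1 u2 : M.W) :
    (clusterFormula Pp Pm M u1 u2).InFragment Pp Pm 1 :=
  ((inFragment_atomType u1).or (inFragment_atomType u2)).box.and
    ((inFragment_atomType u1).dia.and (inFragment_atomType u2).dia)

theorem sat_atomType_iff {N : KModel} {u : M.W} {w : N.W} :
    N.Sat w (atomType Pp Pm M u) ↔ ModalArrow Pp Pm 0 M u N w := by
  rw [modalArrow_zero_iff]
  simp only [atomType, KModel.sat_conj, List.forall_mem_append, List.forall_mem_map,
    List.forall_mem_filter, Finset.mem_toList, decide_eq_true_eq, Function.comp_apply, KModel.Sat]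
  exact and_congr Iff.rfl (forall₂_congr fun _ _ => not_imp_not)

theorem sat_clusterFormula_iff {N : KModel} {u1 u2 : M.W} {y : N.W} :
    N.Sat y (clusterFormula Pp Pm M u1 u2) ↔
      Matches Pp Pm M N {u1, u2} {z | N.R y z} := by
  rw [Matches, and_comm]
  simp [clusterFormula, KModel.Sat, sat_atomType_iff]

end Formulas

def IsFinalCluster (M : KModel) (G : Set M.W) : Prop :=
  ∀ g ∈ G, ∀ w, M.R g w ↔ w ∈ G

def IsFan (M : KModel) (r : M.W) (G H : Set M.W) : Prop :=
  IsFinalCluster M G ∧ IsFinalCluster M H ∧ ∀ w, M.R r w ↔ w = r ∨ w ∈ G ∨ w ∈ H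

/-- Hall's marriage theorem for a `2 × 2` bipartite graph. -/
theorem hall_two {a b c d : Prop} (h₁ : a ∨ b) (h₂ : c ∨ d) (h₃ : a ∨ c) (h₄ : b ∨ d) :
    a ∧ d ∨ b ∧ c := by
  tauto

section Clusters

variable {Pp Pm : Finset ℕ} {M N : KModel}

theorem Matches.refl {G : Set M.W} : Matches Pp Pm M M G G :=
  ⟨fun u hu => ⟨u, hu, ModalArrow.refl⟩, fun u hu => ⟨u, hu, ModalArrow.refl⟩⟩

theorem Matches.pair {u1 u2 : M.W} {g1 g2 : N.W} (h : Matches Pp Pm M N {u1, u2} {g1, g2}) :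
    ∃ v1 v2, ({g1, g2} : Set N.W) = {v1, v2} ∧
      ModalArrow Pp Pm 0 M u1 N v1 ∧ ModalArrow Pp Pm 0 M u2 N v2 := by
  simp only [Matches, Set.forall_mem_insert, Set.exists_mem_insert, Set.mem_singleton_iff,
    forall_eq, exists_eq_left] at h
  rcases hall_two h.1.1 h.1.2 h.2.1 h.2.2 with ⟨h1, h2⟩ | ⟨h1, h2⟩
  exacts [⟨g1, g2, rfl, h1, h2⟩, ⟨g2, g1, Set.pair_comm _ _, h1, h2⟩]

namespace IsFinalCluster

variable {G : Set N.W}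

theorem setOf_R_eq (hG : IsFinalCluster N G) {g : N.W} (hg : g ∈ G) : {w | N.R g w} = G :=
  Set.ext (hG g hg)

theorem isFan (hG : IsFinalCluster N G) {g : N.W} (hg : g ∈ G) : IsFan N g G G :=
  ⟨hG, hG, fun w => (hG g hg w).trans
    ⟨fun h => .inr (.inl h), by rintro (rfl | h | h) <;> assumption⟩⟩

theorem sat_clusterFormula {u1 u2 u : N.W} (hG : IsFinalCluster N {u1, u2})
    (hu : u ∈ ({u1, u2} : Set N.W)) :
    N.Sat u (clusterFormula Pp Pm N u1 u2) := by
  rw [sat_clusterFormula_iff, hG.setOf_R_eq hu]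
  exact Matches.refl

theorem matches_of_sat {u1 u2 : M.W} {y : N.W} (hG : IsFinalCluster N G) (hy : y ∈ G)
    (h : N.Sat y (clusterFormula Pp Pm M u1 u2)) : Matches Pp Pm M N {u1, u2} G := by
  rwa [sat_clusterFormula_iff, hG.setOf_R_eq hy] at h

end IsFinalCluster

namespace IsFan

variable {r : N.W} {G H : Set N.W}

theorem swap (h : IsFan N r G H) : IsFan N r H G :=
  ⟨h.2.1, h.1, fun w => (h.2.2 w).trans (by rw [or_comm (a := w ∈ G)])⟩

theorem R_of_mem (h : IsFan N r G H) {g : N.W} (hg : g ∈ G) : N.R r g :=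
  (h.2.2 g).2 (.inr (.inl hg))

theorem sat_dia_box {u1 u2 : N.W} (h : IsFan N r {u1, u2} H) :
    N.Sat r (dia (.box (clusterFormula Pp Pm N u1 u2))) :=
  (N.sat_dia).2 ⟨u1, h.R_of_mem (by simp), fun z hz =>
    h.1.sat_clusterFormula ((h.1 u1 (by simp) z).1 hz)⟩

theorem sat_box_dia {p1 p2 q1 q2 : N.W} (h : IsFan N r {p1, p2} {q1, q2}) :
    N.Sat r
      (.box (dia (.or (clusterFormula Pp Pm N p1 p2) (clusterFormula Pp Pm N q1 q2)))) := by
  intro z hz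
  rw [KModel.sat_dia]
  rcases (h.2.2 z).1 hz with rfl | hzG | hzH
  · exact ⟨p1, h.R_of_mem (by simp), .inl (h.1.sat_clusterFormula (by simp))⟩
  · exact ⟨z, N.refl z, .inl (h.1.sat_clusterFormula hzG)⟩
  · exact ⟨z, N.refl z, .inr (h.2.1.sat_clusterFormula hzH)⟩

theorem matches_of_sat_dia_box {u1 u2 : M.W} (h : IsFan N r G H) (hG : G.Nonempty)
    (hs : N.Sat r (dia (.box (clusterFormula Pp Pm M u1 u2)))) :
    Matches Pp Pm M N {u1, u2} G ∨ Matches Pp Pm M N {u1, u2} H := by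
  obtain ⟨v, hv, hbox⟩ := (N.sat_dia).1 hs
  rcases (h.2.2 v).1 hv with rfl | hvG | hvH
  · obtain ⟨g, hg⟩ := hG
    exact .inl (h.1.matches_of_sat hg (hbox g (h.R_of_mem hg)))
  · exact .inl (h.1.matches_of_sat hvG (hbox v (N.refl v)))
  · exact .inr (h.2.1.matches_of_sat hvH (hbox v (N.refl v)))

theorem matches_of_sat_box_dia {u1 u2 v1 v2 : M.W} (h : IsFan N r G H) (hG : G.Nonempty)
    (hs : N.Sat r
      (.box (dia (.or (clusterFormula Pp Pm M u1 u2) (clusterFormula Pp Pm M v1 v2))))) :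
    Matches Pp Pm M N {u1, u2} G ∨ Matches Pp Pm M N {v1, v2} G := by
  obtain ⟨g, hg⟩ := hG
  obtain ⟨y, hy, hρ⟩ := (N.sat_dia).1 (hs g (h.R_of_mem hg))
  have hyG : y ∈ G := (h.1 g hg y).1 hy
  exact hρ.imp (h.1.matches_of_sat hyG) (h.1.matches_of_sat hyG)

end IsFan

end Clusters

abbrev lv21Frame : KFrame where
  W := Fin 5
  R i j := i = j ∨ ((i = 1 ∨ i = 2) ∧ (j = 1 ∨ j = 2)) ∨ ((i = 3 ∨ i = 4) ∧ (j = 3 ∨ j = 4)) ∨ i = 0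
  nonempty := ⟨0⟩
  refl := by decide
  trans := by decide

theorem lv21Frame_toModel_mem (V : lv21Frame.W → ℕ → Prop) : lv21Frame.toModel V ∈ C_LV21 := by
  have h : ∃ (x : Fin 5) (C0 C1 : Set (Fin 5)), x ∉ C0 ∧ x ∉ C1 ∧ Disjoint C0 C1 ∧
      TwoElem C0 ∧ TwoElem C1 ∧ (∀ w, w = x ∨ w ∈ C0 ∨ w ∈ C1) ∧
      ∀ u v, lv21Frame.R u v ↔ (u = v ∨ (u ∈ C0 ∧ v ∈ C0) ∨ (u ∈ C1 ∧ v ∈ C1) ∨ u = x) :=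
    ⟨0, {1, 2}, {3, 4}, by decide, by decide, Set.disjoint_left.2 (by decide),
      ⟨1, 2, by decide, rfl⟩, ⟨3, 4, by decide, rfl⟩, by decide, by decide⟩
  exact h

theorem IsFan.pMorphism {M : KModel} {r p1 p2 q1 q2 : M.W} (h : IsFan M r {p1, p2} {q1, q2}) :
    PMorphism lv21Frame M.toKFrame ![r, p1, p2, q1, q2] := by
  obtain ⟨hP, hQ, hr⟩ := h
  simp only [IsFinalCluster, Set.mem_singleton_iff, Set.mem_insert_iff] at hP hQ hr
  constructor
  · intro i j hij
    fin_cases i <;> fin_cases j <;> simp_all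
  · intro i w hw
    fin_cases i
    · rcases (hr w).1 hw with rfl | (rfl | rfl) | rfl | rfl
      exacts [⟨0, by decide, rfl⟩, ⟨1, by decide, rfl⟩, ⟨2, by decide, rfl⟩, ⟨3, by decide, rfl⟩,
        ⟨4, by decide, rfl⟩]
    · rcases (hP p1 (.inl rfl) w).1 hw with rfl | rfl
      exacts [⟨1, by decide, rfl⟩, ⟨2, by decide, rfl⟩]
    · rcases (hP p2 (.inr rfl) w).1 hw with rfl | rfl
      exacts [⟨1, by decide, rfl⟩, ⟨2, by decide, rfl⟩]
    · rcases (hQ q1 (.inl rfl) w).1 hw with rfl | rfl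
      exacts [⟨3, by decide, rfl⟩, ⟨4, by decide, rfl⟩]
    · rcases (hQ q2 (.inr rfl) w).1 hw with rfl | rfl
      exacts [⟨3, by decide, rfl⟩, ⟨4, by decide, rfl⟩]

theorem isFinalCluster_of_R_iff {M : KModel} {x : M.W} {C0 C1 : Set M.W} (hx : x ∉ C0)
    (hdisj : Disjoint C0 C1)
    (hR : ∀ u v, M.R u v ↔ u = v ∨ (u ∈ C0 ∧ v ∈ C0) ∨ (u ∈ C1 ∧ v ∈ C1) ∨ u = x) :
    IsFinalCluster M C0 := by
  intro g hg w
  rw [hR]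
  refine ⟨?_, fun hw => .inr (.inl ⟨hg, hw⟩)⟩
  rintro (rfl | ⟨-, hw⟩ | ⟨hg', -⟩ | rfl)
  exacts [hg, hw, (Set.disjoint_left.1 hdisj hg hg').elim, (hx hg).elim]

theorem exists_isFan {M : KModel} (hM : M ∈ C_LV21) (w : M.W) :
    ∃ p1 p2 q1 q2, IsFan M w {p1, p2} {q1, q2} := by
  obtain ⟨x, C0, C1, hx0, hx1, hdisj, ⟨a1, a2, -, rfl⟩, ⟨b1, b2, -, rfl⟩, hcov, hR⟩ := hM
  have hA := isFinalCluster_of_R_iff hx0 hdisj hR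
  have hB := isFinalCluster_of_R_iff hx1 hdisj.symm fun u v => (hR u v).trans (by tauto)
  rcases hcov w with rfl | hw | hw
  · exact ⟨a1, a2, b1, b2, hA, hB, fun v => iff_of_true ((hR w v).2 (by simp)) (hcov v)⟩
  · exact ⟨a1, a2, a1, a2, hA.isFan hw⟩
  · exact ⟨b1, b2, b1, b2, hB.isFan hw⟩

theorem IsFan.exists_pMorphism_pair {Pp Pm : Finset ℕ} {M0 M1 : KModel} {w0 p1 p2 q1 q2 : M0.W}
    {w1 g1 g2 h1 h2 : M1.W} (fan0 : IsFan M0 w0 {p1, p2} {q1, q2})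
    (fan1 : IsFan M1 w1 {g1, g2} {h1, h2}) (hw : ModalArrow Pp Pm 0 M0 w0 M1 w1)
    (hG : Matches Pp Pm M0 M1 {p1, p2} {g1, g2}) (hH : Matches Pp Pm M0 M1 {q1, q2} {h1, h2}) :
    ∃ (F : KFrame) (wstar : F.W) (f0 : F.W → M0.W) (f1 : F.W → M1.W),
      (∀ V : F.W → ℕ → Prop, F.toModel V ∈ C_LV21) ∧
      PMorphism F M0.toKFrame f0 ∧ PMorphism F M1.toKFrame f1 ∧
      f0 wstar = w0 ∧ f1 wstar = w1 ∧ ∀ x : F.W, ModalArrow Pp Pm 0 M0 (f0 x) M1 (f1 x) := by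
  obtain ⟨v1, v2, hv, hp1, hp2⟩ := hG.pair
  obtain ⟨v3, v4, hv', hq1, hq2⟩ := hH.pair
  rw [hv, hv'] at fan1
  refine ⟨lv21Frame, 0, ![w0, p1, p2, q1, q2], ![w1, v1, v2, v3, v4], lv21Frame_toModel_mem,
    fan0.pMorphism, fan1.pMorphism, rfl, rfl, fun i => ?_⟩
  fin_cases i
  exacts [hw, hp1, hp2, hq1, hq2]

theorem stmt13 : EnjoysIP C_LV21 3 := by
  intro Pp Pm M0 M1 hM0 hM1 w0 w1 harrow
  obtain ⟨p1, p2, q1, q2, fan0⟩ := exists_isFan hM0 w0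
  obtain ⟨g1, g2, h1, h2, fan1⟩ := exists_isFan hM1 w1
  have hρ {u1 u2 : M0.W} := inFragment_clusterFormula (Pp := Pp) (Pm := Pm) u1 u2
  have hP := fan1.matches_of_sat_dia_box (Set.insert_nonempty _ _)
    (harrow.sat hρ.box.dia fan0.sat_dia_box)
  have hQ := fan1.matches_of_sat_dia_box (Set.insert_nonempty _ _)
    (harrow.sat hρ.box.dia fan0.swap.sat_dia_box)
  have hG := fan1.matches_of_sat_box_dia (Set.insert_nonempty _ _)
    (harrow.sat (hρ.or hρ).dia.box fan0.sat_box_dia)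
  have hH := fan1.swap.matches_of_sat_box_dia (Set.insert_nonempty _ _)
    (harrow.sat (hρ.or hρ).dia.box fan0.sat_box_dia)
  rcases hall_two hP hQ hG hH with ⟨hPG, hQH⟩ | ⟨hPH, hQG⟩
  · exact fan0.exists_pMorphism_pair fan1 (harrow.mono (Nat.zero_le 3)) hPG hQH
  · exact fan0.exists_pMorphism_pair fan1.swap (harrow.mono (Nat.zero_le 3)) hPH hQG
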